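/- Let K be a field of characteristic not 2, E: y² = (x−α₁)(x−α₂)(x−α₃) with distinct αᵢ ∈ K. A point P = (x₀, y₀) ∈ E(K) has order 3 if and only if one can choose square roots rᵢ = √(x₀ − αᵢ) ∈ K (i = 1,2,3) such that r₁r₂ + r₂r₃ + r₃r₁ = 0. -/

import Mathlib

/-!
A point `P = (x₀, y₀)` has order 3 iff `2P = -P`, i.e. iff `y₀ ≠ 0` and the tangent at `P`
meets the curve again only at `P`. Writing `uᵢ = x₀ - αᵢ`, so that `y₀² = u₁u₂u₃` and the
tangent slope is `e₂(u) / 2y₀`, this says `e₂(u)² = 4y₀² e₁(u)`. If `rᵢ² = uᵢ`, then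
`e₂(u) = σ₂(r)² - 2σ₁(r)σ₃(r)` and `e₁(u) = σ₁(r)² - 2σ₂(r)`, so `σ₂(r) = 0` gives the
condition; conversely `rᵢ = (uᵢ(uⱼ + uₖ) - uⱼuₖ) / 2y₀` are square roots with `σ₂(r) = 0`,
and distinctness of the `αᵢ` forces `r₁r₂r₃ ≠ 0`, i.e. `y₀ ≠ 0`.
-/

/-- The elliptic curve `y² = (x − α₁)(x − α₂)(x − α₃)` as an affine Weierstrass curve. -/
def cubicCurve {K : Type*} [Field K] (α₁ α₂ α₃ : K) : WeierstrassCurve.Affine K :=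
  { a₁ := 0, a₂ := -(α₁ + α₂ + α₃), a₃ := 0,
    a₄ := α₁ * α₂ + α₂ * α₃ + α₃ * α₁, a₆ := -(α₁ * α₂ * α₃) }

section SquareRoots

theorem sq_add_sq_mul_sq_eq_of_add_mul_eq_zero {R : Type*} [CommRing R] {r₁ r₂ r₃ : R}
    (hs : r₁ * r₂ + r₂ * r₃ + r₃ * r₁ = 0) :
    (r₁ ^ 2 * r₂ ^ 2 + r₂ ^ 2 * r₃ ^ 2 + r₃ ^ 2 * r₁ ^ 2) ^ 2 =
      4 * (r₁ * r₂ * r₃) ^ 2 * (r₁ ^ 2 + r₂ ^ 2 + r₃ ^ 2) := by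
  linear_combination ((r₁ * r₂ + r₂ * r₃ + r₃ * r₁) ^ 3 -
    4 * (r₁ * r₂ + r₂ * r₃ + r₃ * r₁) * (r₁ * r₂ * r₃) * (r₁ + r₂ + r₃) +
    8 * (r₁ * r₂ * r₃) ^ 2) * hs

theorem mul_mul_ne_zero_of_add_mul_eq_zero {R : Type*} [CommRing R] [NoZeroDivisors R]
    {r₁ r₂ r₃ : R} (hs : r₁ * r₂ + r₂ * r₃ + r₃ * r₁ = 0)
    (h₁₂ : r₁ ^ 2 ≠ r₂ ^ 2) (h₁₃ : r₁ ^ 2 ≠ r₃ ^ 2) (h₂₃ : r₂ ^ 2 ≠ r₃ ^ 2) :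
    r₁ * r₂ * r₃ ≠ 0 := by
  have of_eq_zero : ∀ a b c : R,
      a * b + b * c + c * a = 0 → a = 0 → b ^ 2 = a ^ 2 ∨ c ^ 2 = a ^ 2 := by
    rintro a b c hs rfl
    simpa using hs
  intro h
  obtain h₁ | h₂ | h₃ : r₁ = 0 ∨ r₂ = 0 ∨ r₃ = 0 := by simpa [or_assoc] using h
  · rcases of_eq_zero r₁ r₂ r₃ hs h₁ with h | h
    exacts [h₁₂ h.symm, h₁₃ h.symm]
  · rcases of_eq_zero r₂ r₃ r₁ (by linear_combination hs) h₂ with h | h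
    exacts [h₂₃ h.symm, h₁₂ h]
  · rcases of_eq_zero r₃ r₁ r₂ (by linear_combination hs) h₃ with h | h
    exacts [h₁₃ h, h₂₃ h]

variable {F : Type*} [Field F] {u₁ u₂ u₃ y : F}

theorem exists_sqrts_add_mul_eq_zero_of_sq_add_mul_eq (h2 : (2 : F) ≠ 0) (hy : y ≠ 0)
    (hu : y ^ 2 = u₁ * u₂ * u₃)
    (h : (u₁ * u₂ + u₂ * u₃ + u₃ * u₁) ^ 2 = 4 * y ^ 2 * (u₁ + u₂ + u₃)) :
    ∃ r₁ r₂ r₃ : F, r₁ ^ 2 = u₁ ∧ r₂ ^ 2 = u₂ ∧ r₃ ^ 2 = u₃ ∧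
      r₁ * r₂ + r₂ * r₃ + r₃ * r₁ = 0 := by
  refine ⟨(u₁ * (u₂ + u₃) - u₂ * u₃) / (2 * y), (u₂ * (u₁ + u₃) - u₁ * u₃) / (2 * y),
    (u₃ * (u₁ + u₂) - u₁ * u₂) / (2 * y), ?_, ?_, ?_, ?_⟩ <;> field_simp
  · linear_combination h + 4 * (u₂ + u₃) * hu
  · linear_combination h + 4 * (u₁ + u₃) * hu
  · linear_combination h + 4 * (u₁ + u₂) * hu
  · linear_combination -h - 4 * (u₁ + u₂ + u₃) * hu

theorem exists_sqrts_add_mul_eq_zero_iff (h2 : (2 : F) ≠ 0) (hu : y ^ 2 = u₁ * u₂ * u₃)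
    (h₁₂ : u₁ ≠ u₂) (h₁₃ : u₁ ≠ u₃) (h₂₃ : u₂ ≠ u₃) :
    (∃ r₁ r₂ r₃ : F, r₁ ^ 2 = u₁ ∧ r₂ ^ 2 = u₂ ∧ r₃ ^ 2 = u₃ ∧
      r₁ * r₂ + r₂ * r₃ + r₃ * r₁ = 0) ↔
      y ≠ 0 ∧ (u₁ * u₂ + u₂ * u₃ + u₃ * u₁) ^ 2 = 4 * y ^ 2 * (u₁ + u₂ + u₃) := by
  constructor
  · rintro ⟨r₁, r₂, r₃, rfl, rfl, rfl, hs⟩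
    have hy : y ^ 2 = (r₁ * r₂ * r₃) ^ 2 := by rw [hu]; ring
    refine ⟨?_, hy ▸ sq_add_sq_mul_sq_eq_of_add_mul_eq_zero hs⟩
    rintro rfl
    exact mul_mul_ne_zero_of_add_mul_eq_zero hs h₁₂ h₁₃ h₂₃
      (pow_eq_zero_iff two_ne_zero |>.1 (by rw [← hy]; ring))
  · rintro ⟨hy, h⟩
    exact exists_sqrts_add_mul_eq_zero_of_sq_add_mul_eq h2 hy hu h

end SquareRoots

open WeierstrassCurve.Affine WeierstrassCurve.Affine.Point

theorem WeierstrassCurve.Affine.Point.addOrderOf_some_eq_three_iff {F : Type*} [Field F]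
    [DecidableEq F] {W : WeierstrassCurve.Affine F} {x y : F} (h : W.Nonsingular x y) :
    addOrderOf (some x y h) = 3 ↔ y ≠ W.negY x y ∧ W.addX x x (W.slope x x y y) = x := by
  have : Fact (Nat.Prime 3) := ⟨Nat.prime_three⟩
  rw [addOrderOf_eq_prime_iff, succ_nsmul, two_nsmul, add_eq_zero_iff_eq_neg]
  simp only [ne_eq, some_ne_zero, not_false_eq_true, and_true]
  by_cases hy : y = W.negY x y
  · rw [add_self_of_Y_eq hy, eq_comm, neg_eq_zero]
    simp only [some_ne_zero, false_iff, not_and]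
    exact fun hne => absurd hy hne
  · rw [add_self_of_Y_ne' hy, neg_inj, some.injEq, negAddY]
    exact ⟨fun h => ⟨hy, h.1⟩, fun h => ⟨h.2, by rw [h.2, sub_self, mul_zero, zero_add]⟩⟩

section cubicCurve

variable {K : Type*} [Field K] {α₁ α₂ α₃ x y : K}

theorem cubicCurve_equation_iff :
    (cubicCurve α₁ α₂ α₃).Equation x y ↔ y ^ 2 = (x - α₁) * (x - α₂) * (x - α₃) := by
  rw [equation_iff, cubicCurve]
  constructor <;> intro h <;> linear_combination h

theorem cubicCurve_Y_ne_negY_iff (h2 : (2 : K) ≠ 0) :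
    y ≠ (cubicCurve α₁ α₂ α₃).negY x y ↔ y ≠ 0 := by
  simp [negY, cubicCurve, eq_neg_iff_add_eq_zero, ← two_mul, h2]

theorem cubicCurve_addX_slope_self_eq_iff [DecidableEq K] (h2 : (2 : K) ≠ 0) (hy : y ≠ 0) :
    (cubicCurve α₁ α₂ α₃).addX x x ((cubicCurve α₁ α₂ α₃).slope x x y y) = x ↔
      ((x - α₁) * (x - α₂) + (x - α₂) * (x - α₃) + (x - α₃) * (x - α₁)) ^ 2 =
        4 * y ^ 2 * ((x - α₁) + (x - α₂) + (x - α₃)) := by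
  have hsub : (cubicCurve α₁ α₂ α₃).addX x x ((cubicCurve α₁ α₂ α₃).slope x x y y) - x =
      (((x - α₁) * (x - α₂) + (x - α₂) * (x - α₃) + (x - α₃) * (x - α₁)) ^ 2 -
        4 * y ^ 2 * ((x - α₁) + (x - α₂) + (x - α₃))) / (2 * y) ^ 2 := by
    rw [slope_of_Y_ne rfl ((cubicCurve_Y_ne_negY_iff h2).2 hy)]
    simp only [addX, negY, cubicCurve, zero_mul, sub_zero, add_zero, sub_neg_eq_add]
    rw [← two_mul]
    field_simp
    ring
  rw [← sub_eq_zero, hsub, div_eq_zero_iff, sub_eq_zero]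
  simp [hy, h2]

end cubicCurve

open Classical in
theorem order_three_iff {K : Type*} [Field K] (h2 : (2 : K) ≠ 0)
    (α₁ α₂ α₃ : K) (h12 : α₁ ≠ α₂) (h13 : α₁ ≠ α₃) (h23 : α₂ ≠ α₃)
    (x₀ y₀ : K) (hP : (cubicCurve α₁ α₂ α₃).Nonsingular x₀ y₀) :
    addOrderOf (WeierstrassCurve.Affine.Point.some x₀ y₀ hP) = 3 ↔
      ∃ r₁ r₂ r₃ : K, r₁ ^ 2 = x₀ - α₁ ∧ r₂ ^ 2 = x₀ - α₂ ∧ r₃ ^ 2 = x₀ - α₃ ∧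
        r₁ * r₂ + r₂ * r₃ + r₃ * r₁ = 0 := by
  rw [addOrderOf_some_eq_three_iff, cubicCurve_Y_ne_negY_iff h2,
    exists_sqrts_add_mul_eq_zero_iff h2 (cubicCurve_equation_iff.1 hP.1)
      (sub_right_injective.ne h12) (sub_right_injective.ne h13) (sub_right_injective.ne h23)]
  exact and_congr_right (cubicCurve_addX_slope_self_eq_iff h2)
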